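/- arXiv:1101.5471 — 2 statements merged into one kernel-verified Lean document; each statement's English description precedes it below -/
import Mathlib

section
/- Let ν ≥ 1, let A be a symmetric ν×ν matrix over ℚ, and let n₁,…,n_ν ∈ ℚ satisfy Σ_j A_{ij}·n_j = 0 for every index i. Then for every ℓ ∈ ℚ^ν, the vector x defined by x_i = ℓ_i·n_i satisfies Σ_{i,j} x_i·A_{ij}·x_j = −Σ_{1≤i<j≤ν} (ℓ_i − ℓ_j)²·n_i·n_j·A_{ij}. -/
/-!
Expanding `(ℓᵢ - ℓⱼ)²` splits `∑ᵢⱼ (ℓᵢ - ℓⱼ)² nᵢ nⱼ Aᵢⱼ` into two terms that vanish because every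
row of `A` pairs to zero against `n`, and `-2` times the quadratic form at `xᵢ = ℓᵢ nᵢ`. The summand
is symmetric in `i, j` and zero on the diagonal, so the full double sum is twice the sum over `i < j`.
-/

open Finset

section Triangle

variable {ι M : Type*} [Fintype ι] [LinearOrder ι] [AddCommMonoid M]

theorem Finset.sum_sum_eq_two_nsmul_sum_sum_lt (f : ι → ι → M) (hsymm : ∀ i j, f j i = f i j)
    (hdiag : ∀ i, f i i = 0) :
    ∑ i, ∑ j, f i j = 2 • ∑ i, ∑ j with i < j, f i j := by
  have hsplit : ∀ i j, f i j = (if i < j then f i j else 0) + (if j < i then f i j else 0) := by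
    intro i j
    rcases lt_trichotomy i j with h | rfl | h
    · simp [h, h.not_gt]
    · simp [hdiag]
    · simp [h, h.not_gt]
  calc ∑ i, ∑ j, f i j
      = ∑ i, ∑ j with i < j, f i j + ∑ i, ∑ j with j < i, f i j := by
        simp only [sum_filter, ← sum_add_distrib, ← hsplit]
    _ = ∑ i, ∑ j with i < j, f i j + ∑ i, ∑ j with i < j, f i j := by
        simp only [sum_filter]
        rw [sum_comm (f := fun i j => if j < i then f i j else 0)]
        simp only [hsymm]
    _ = 2 • ∑ i, ∑ j with i < j, f i j := (two_nsmul _).symm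

end Triangle

theorem Matrix.IsSymm.sum_sum_sq_sub_mul_eq_neg_two_mul {ι R : Type*} [Fintype ι] [CommRing R]
    {A : Matrix ι ι R} (hA : A.IsSymm) {n : ι → R} (hn : ∀ i, ∑ j, A i j * n j = 0)
    (ℓ : ι → R) :
    ∑ i, ∑ j, (ℓ i - ℓ j) ^ 2 * n i * n j * A i j
      = -2 * ∑ i, ∑ j, ℓ i * n i * A i j * (ℓ j * n j) := by
  have hrow : ∀ i, ∑ j, ℓ i ^ 2 * n i * (A i j * n j) = 0 := fun i => by
    rw [← mul_sum, hn, mul_zero]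
  calc ∑ i, ∑ j, (ℓ i - ℓ j) ^ 2 * n i * n j * A i j
      = ∑ i, ∑ j, (ℓ i ^ 2 * n i * (A i j * n j) + ℓ j ^ 2 * n j * (A j i * n i)
          - 2 * (ℓ i * n i * A i j * (ℓ j * n j))) := by
        refine sum_congr rfl fun i _ => sum_congr rfl fun j _ => ?_
        rw [hA.apply i j]
        ring
    _ = ∑ i, ∑ j, ℓ i ^ 2 * n i * (A i j * n j) + ∑ i, ∑ j, ℓ j ^ 2 * n j * (A j i * n i)
          - 2 * ∑ i, ∑ j, ℓ i * n i * A i j * (ℓ j * n j) := by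
        simp only [sum_add_distrib, sum_sub_distrib, mul_sum]
    _ = -2 * ∑ i, ∑ j, ℓ i * n i * A i j * (ℓ j * n j) := by
        rw [sum_comm (f := fun i j => ℓ j ^ 2 * n j * (A j i * n i))]
        simp only [hrow, sum_const_zero]
        ring

theorem linking_form_identity_general (ν : ℕ)
    (A : Matrix (Fin ν) (Fin ν) ℚ) (hsym : A.IsSymm)
    (n : Fin ν → ℚ) (hn : ∀ i, ∑ j, A i j * n j = 0)
    (ℓ : Fin ν → ℚ) :
    ∑ i, ∑ j, (ℓ i * n i) * A i j * (ℓ j * n j)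
      = -∑ i, ∑ j ∈ Finset.univ.filter (fun j => i < j),
          (ℓ i - ℓ j) ^ 2 * n i * n j * A i j := by
  have htriangle := sum_sum_eq_two_nsmul_sum_sum_lt
    (fun i j => (ℓ i - ℓ j) ^ 2 * n i * n j * A i j)
    (fun i j => by rw [hsym.apply j i]; ring) (fun i => by simp)
  rw [hsym.sum_sum_sq_sub_mul_eq_neg_two_mul hn ℓ, two_nsmul] at htriangle
  linarith

/-- For a symmetric ν×ν rational matrix `A` whose rows pair to zero
against the vector `n` (i.e. `∑ j, A i j * n j = 0` for all `i`), the quadratic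
form evaluated at the vector `x i = ℓ i * n i` equals
`-∑_{i<j} (ℓ i - ℓ j)^2 * n i * n j * A i j`. -/
theorem linking_form_identity (ν : ℕ) (hν : 1 ≤ ν)
    (A : Matrix (Fin ν) (Fin ν) ℚ) (hsym : A.IsSymm)
    (n : Fin ν → ℚ) (hn : ∀ i, ∑ j, A i j * n j = 0)
    (ℓ : Fin ν → ℚ) :
    ∑ i, ∑ j, (ℓ i * n i) * A i j * (ℓ j * n j)
      = -∑ i, ∑ j ∈ Finset.univ.filter (fun j => i < j),
          (ℓ i - ℓ j) ^ 2 * n i * n j * A i j :=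
  linking_form_identity_general ν A hsym n hn ℓ
end

section
/- Let ν ≥ 1 and let A be a symmetric ν×ν matrix over ℚ. Suppose there are rational numbers n₁,…,n_ν with n_i > 0 for all i such that Σ_j A_{ij}·n_j = 0 for every i, and suppose A_{ij} > 0 for all i ≠ j. Then A is negative semidefinite (xᵀAx ≤ 0 for every x ∈ ℚ^ν), and the null-space {x ∈ ℚ^ν : Ax = 0} is one-dimensional, spanned by the vector n = (n₁,…,n_ν). -/
/-!
Substituting `x i = n i * y i`, the form `xᵀ A x` becomes `yᵀ B y` with
`B = diag(n) A diag(n)`, a symmetric matrix whose rows sum to zero. For such a matrix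
`∑ i j, B i j (y i - y j)² = -2 yᵀ B y`, and the left side is a sum of nonnegative terms
because the off-diagonal entries of `B` are positive. Hence `yᵀ B y ≤ 0`, with equality
only if `y` is constant, i.e. only if `x` is a multiple of `n`.
-/

open Finset

namespace Matrix

variable {ι : Type*}

theorem dotProduct_mulVec_eq_sum_sum [Fintype ι] {R : Type*} [CommSemiring R]
    (A : Matrix ι ι R) (x y : ι → R) : x ⬝ᵥ A *ᵥ y = ∑ i, ∑ j, x i * A i j * y j := by
  simp only [dotProduct, mulVec, mul_sum, mul_assoc]

section CommRing

variable {R : Type*} [CommRing R] [Fintype ι]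

theorem IsSymm.sum_sum_mul_sub_sq {B : Matrix ι ι R} (hB : B.IsSymm)
    (hrow : ∀ i, ∑ j, B i j = 0) (y : ι → R) :
    ∑ i, ∑ j, B i j * (y i - y j) ^ 2 = -2 * ∑ i, ∑ j, y i * B i j * y j := by
  have hcol : ∀ j, ∑ i, B i j = 0 := fun j => by simpa only [hB.apply] using hrow j
  have hexpand : ∀ i j, B i j * (y i - y j) ^ 2
      = y i ^ 2 * B i j - 2 * (y i * B i j * y j) + y j ^ 2 * B i j := fun i j => by ring
  have hleft : ∑ i, ∑ j, y i ^ 2 * B i j = 0 := by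
    simp only [← mul_sum, hrow, mul_zero, sum_const_zero]
  have hright : ∑ i, ∑ j, y j ^ 2 * B i j = 0 := by
    rw [sum_comm]; simp only [← mul_sum, hcol, mul_zero, sum_const_zero]
  simp only [hexpand, sum_add_distrib, sum_sub_distrib, hleft, hright]
  simp only [← mul_sum]
  ring

variable [DecidableEq ι]

theorem diagonal_mul_mul_diagonal_apply (A : Matrix ι ι R) (d : ι → R) (i j : ι) :
    (diagonal d * A * diagonal d) i j = d i * A i j * d j := by
  rw [mul_diagonal, diagonal_mul]

theorem IsSymm.diagonal_mul_mul_diagonal {A : Matrix ι ι R} (hA : A.IsSymm) (d : ι → R) :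
    (diagonal d * A * diagonal d).IsSymm :=
  IsSymm.ext fun i j => by
    simp only [diagonal_mul_mul_diagonal_apply, hA.apply]
    ring

theorem sum_diagonal_mul_mul_diagonal_apply_eq_zero {A : Matrix ι ι R} {d : ι → R}
    (hd : A *ᵥ d = 0) (i : ι) : ∑ j, (diagonal d * A * diagonal d) i j = 0 := by
  have : ∑ j, A i j * d j = 0 := congrFun hd i
  simp only [diagonal_mul_mul_diagonal_apply, mul_assoc, ← mul_sum, this, mul_zero]

theorem sum_sum_mul_diagonal_mul_mul_diagonal (A : Matrix ι ι R) (d y : ι → R) :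
    ∑ i, ∑ j, y i * (diagonal d * A * diagonal d) i j * y j
      = ∑ i, ∑ j, (d i * y i) * A i j * (d j * y j) := by
  simp only [diagonal_mul_mul_diagonal_apply]
  exact sum_congr rfl fun i _ => sum_congr rfl fun j _ => by ring

end CommRing

section Ordered

variable {R : Type*} [CommRing R] [LinearOrder R] [IsStrictOrderedRing R]

theorem mul_sub_sq_nonneg_of_off_diag {B : Matrix ι ι R} (hoff : ∀ i j, i ≠ j → 0 ≤ B i j)
    (y : ι → R) (i j : ι) : 0 ≤ B i j * (y i - y j) ^ 2 := by
  obtain rfl | hij := eq_or_ne i j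
  · simp
  · exact mul_nonneg (hoff i j hij) (sq_nonneg _)

variable [Fintype ι]

theorem IsSymm.sum_sum_mul_nonpos {B : Matrix ι ι R} (hB : B.IsSymm)
    (hrow : ∀ i, ∑ j, B i j = 0) (hoff : ∀ i j, i ≠ j → 0 ≤ B i j) (y : ι → R) :
    ∑ i, ∑ j, y i * B i j * y j ≤ 0 := by
  have hident := hB.sum_sum_mul_sub_sq hrow y
  have hnonneg : 0 ≤ ∑ i, ∑ j, B i j * (y i - y j) ^ 2 :=
    sum_nonneg fun i _ => sum_nonneg fun j _ => mul_sub_sq_nonneg_of_off_diag hoff y i j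
  linarith

theorem IsSymm.eq_of_sum_sum_mul_eq_zero {B : Matrix ι ι R} (hB : B.IsSymm)
    (hrow : ∀ i, ∑ j, B i j = 0) (hoff : ∀ i j, i ≠ j → 0 < B i j) {y : ι → R}
    (hy : ∑ i, ∑ j, y i * B i j * y j = 0) (i j : ι) : y i = y j := by
  obtain rfl | hij := eq_or_ne i j
  · rfl
  have hoff' : ∀ i j, i ≠ j → 0 ≤ B i j := fun i j h => (hoff i j h).le
  have hsum : ∑ i, ∑ j, B i j * (y i - y j) ^ 2 = 0 := by
    rw [hB.sum_sum_mul_sub_sq hrow, hy, mul_zero]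
  have hterm : B i j * (y i - y j) ^ 2 = 0 := by
    rw [sum_eq_zero_iff_of_nonneg fun i _ => sum_nonneg fun j _ =>
      mul_sub_sq_nonneg_of_off_diag hoff' y i j] at hsum
    exact (sum_eq_zero_iff_of_nonneg fun j _ => mul_sub_sq_nonneg_of_off_diag hoff' y i j).1
      (hsum i (mem_univ i)) j (mem_univ j)
  have hsq := (mul_eq_zero.1 hterm).resolve_left (hoff i j hij).ne'
  exact sub_eq_zero.1 (pow_eq_zero_iff two_ne_zero |>.1 hsq)

end Ordered

section Field

variable {K : Type*} [Field K] [Fintype ι] [DecidableEq ι]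

theorem sum_sum_mul_eq_sum_sum_div_mul_diagonal_mul_mul_diagonal (A : Matrix ι ι K)
    {n : ι → K} (hn : ∀ i, n i ≠ 0) (x : ι → K) :
    ∑ i, ∑ j, x i * A i j * x j
      = ∑ i, ∑ j, (x / n) i * (diagonal n * A * diagonal n) i j * (x / n) j := by
  simp only [sum_sum_mul_diagonal_mul_mul_diagonal, Pi.div_apply, mul_div_cancel₀ _ (hn _)]

variable [LinearOrder K] [IsStrictOrderedRing K]

theorem IsSymm.sum_sum_mul_nonpos_of_mulVec_eq_zero {A : Matrix ι ι K} (hA : A.IsSymm)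
    {n : ι → K} (hn : A *ᵥ n = 0) (hpos : ∀ i, 0 < n i) (hoff : ∀ i j, i ≠ j → 0 ≤ A i j)
    (x : ι → K) : ∑ i, ∑ j, x i * A i j * x j ≤ 0 := by
  rw [sum_sum_mul_eq_sum_sum_div_mul_diagonal_mul_mul_diagonal A fun i => (hpos i).ne']
  refine (hA.diagonal_mul_mul_diagonal n).sum_sum_mul_nonpos
    (sum_diagonal_mul_mul_diagonal_apply_eq_zero hn) (fun i j hij => ?_) _
  rw [diagonal_mul_mul_diagonal_apply]
  exact mul_nonneg (mul_nonneg (hpos i).le (hoff i j hij)) (hpos j).le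

theorem IsSymm.mulVec_eq_zero_iff_exists_eq_smul {A : Matrix ι ι K} (hA : A.IsSymm)
    {n : ι → K} (hn : A *ᵥ n = 0) (hpos : ∀ i, 0 < n i) (hoff : ∀ i j, i ≠ j → 0 < A i j)
    (x : ι → K) : A *ᵥ x = 0 ↔ ∃ c : K, x = c • n := by
  refine ⟨fun hx => ?_, fun ⟨c, hc⟩ => by rw [hc, mulVec_smul, hn, smul_zero]⟩
  have hform : ∑ i, ∑ j, (x / n) i * (diagonal n * A * diagonal n) i j * (x / n) j = 0 := by
    rw [← sum_sum_mul_eq_sum_sum_div_mul_diagonal_mul_mul_diagonal A fun i => (hpos i).ne',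
      ← dotProduct_mulVec_eq_sum_sum, hx, dotProduct_zero]
  have hconst := (hA.diagonal_mul_mul_diagonal n).eq_of_sum_sum_mul_eq_zero
    (sum_diagonal_mul_mul_diagonal_apply_eq_zero hn)
    (fun i j hij => by
      rw [diagonal_mul_mul_diagonal_apply]
      exact mul_pos (mul_pos (hpos i) (hoff i j hij)) (hpos j)) hform
  obtain ⟨c, hc⟩ : ∃ c, ∀ i, (x / n) i = c := by
    rcases isEmpty_or_nonempty ι with _ | ⟨⟨i₀⟩⟩
    · exact ⟨0, isEmptyElim⟩
    · exact ⟨_, fun i => hconst i i₀⟩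
  refine ⟨c, funext fun i => ?_⟩
  rw [Pi.smul_apply, smul_eq_mul, ← hc i, Pi.div_apply, div_mul_cancel₀ _ (hpos i).ne']

end Field

end Matrix

theorem linking_matrix_negative_semidefinite_general (ν : ℕ)
    (A : Matrix (Fin ν) (Fin ν) ℚ) (hsym : A.IsSymm)
    (n : Fin ν → ℚ) (hpos : ∀ i, 0 < n i)
    (hn : ∀ i, ∑ j, A i j * n j = 0)
    (hoff : ∀ i j, i ≠ j → 0 < A i j) :
    (∀ x : Fin ν → ℚ, ∑ i, ∑ j, x i * A i j * x j ≤ 0) ∧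
    (∀ x : Fin ν → ℚ, A.mulVec x = 0 ↔ ∃ c : ℚ, x = c • n) :=
  have hAn : A.mulVec n = 0 := funext hn
  ⟨hsym.sum_sum_mul_nonpos_of_mulVec_eq_zero hAn hpos fun i j hij => (hoff i j hij).le,
    hsym.mulVec_eq_zero_iff_exists_eq_smul hAn hpos hoff⟩

/-- A symmetric rational matrix with positive off-diagonal entries
whose rows pair to zero against a positive vector `n` is negative semidefinite,
and its null-space is one-dimensional, spanned by `n`. -/
theorem linking_matrix_negative_semidefinite (ν : ℕ) (hν : 1 ≤ ν)
    (A : Matrix (Fin ν) (Fin ν) ℚ) (hsym : A.IsSymm)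
    (n : Fin ν → ℚ) (hpos : ∀ i, 0 < n i)
    (hn : ∀ i, ∑ j, A i j * n j = 0)
    (hoff : ∀ i j, i ≠ j → 0 < A i j) :
    (∀ x : Fin ν → ℚ, ∑ i, ∑ j, x i * A i j * x j ≤ 0) ∧
    (∀ x : Fin ν → ℚ, A.mulVec x = 0 ↔ ∃ c : ℚ, x = c • n) :=
  linking_matrix_negative_semidefinite_general ν A hsym n hpos hn hoff
end
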